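/- arXiv:1709.09416 — 3 statements merged into one kernel-verified Lean document; each statement's English description precedes it below -/
import Mathlib

section
/- Let W be a pointy potential on ℝ^d with constants λ ∈ ℝ and w_∞ ≥ 0. For a probability measure ρ on ℝ^d, define the velocity field â_ρ(x) := −∫_{ℝ^d} ∇̂W(x − y) ρ(dy). Then: (1) |â_ρ(x)| ≤ w_∞ for all x ∈ ℝ^d; (2) â_ρ satisfies the one-sided Lipschitz estimate ⟨â_ρ(x) − â_ρ(y), x − y⟩ ≤ −λ |x − y|² for all x, y ∈ ℝ^d. -/
open MeasureTheory Real Set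
open scoped RealInnerProductSpace ENNReal

noncomputable section

/-- `ℝ^d` with the Euclidean structure. -/
abbrev Euc (d : ℕ) := EuclideanSpace ℝ (Fin d)

open Classical in
/-- `∇̂W`: the gradient of `W` away from `0`, and `0` at `0`. -/
def hatGrad {d : ℕ} (W : Euc d → ℝ) (x : Euc d) : Euc d :=
  if x = 0 then 0 else gradient W x

/-!
The function `V x = W x - λ/2 |x|²` is convex, and `∇̂W(u) - λ u` is a subgradient of `V` at
every `u`: away from `0` because `V` is differentiable there, and at `0` because an even convex
function is minimal at `0`. Subgradients of a convex function are monotone, which is the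
pointwise estimate `λ |u - v|² ≤ ⟨∇̂W u - ∇̂W v, u - v⟩`; integrating it against `ρ` gives the
one-sided Lipschitz bound, and the bound on `|â_ρ|` is the pointwise bound on `∇̂W` integrated.
-/

section Subgradient

variable {E : Type*} [NormedAddCommGroup E] [InnerProductSpace ℝ E]

def HasSubgradientAt (f : E → ℝ) (g x : E) : Prop :=
  ∀ y, f x + ⟪g, y - x⟫ ≤ f y

theorem HasSubgradientAt.inner_sub_nonneg {f : E → ℝ} {g h x y : E}
    (hx : HasSubgradientAt f g x) (hy : HasSubgradientAt f h y) : 0 ≤ ⟪g - h, x - y⟫ := by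
  have hxy := hx y
  have hyx := hy x
  have e : ⟪g, x - y⟫ = -⟪g, y - x⟫ := by rw [← inner_neg_right, neg_sub]
  rw [inner_sub_left, e]
  linarith

theorem ConvexOn.hasSubgradientAt_zero_of_even {f : E → ℝ} (hf : ConvexOn ℝ univ f)
    (heven : ∀ x, f (-x) = f x) : HasSubgradientAt f 0 0 := by
  intro y
  have hmid := hf.2 (mem_univ y) (mem_univ (-y)) (by norm_num : (0 : ℝ) ≤ 1 / 2)
    (by norm_num : (0 : ℝ) ≤ 1 / 2) (by norm_num)
  rw [smul_neg, add_neg_cancel, heven, smul_eq_mul] at hmid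
  simp only [inner_zero_left, add_zero]
  linarith

theorem ConvexOn.add_fderiv_sub_le {F : Type*} [NormedAddCommGroup F] [NormedSpace ℝ F]
    {s : Set F} {f : F → ℝ} {f' : F →L[ℝ] ℝ} {x y : F} (hf : ConvexOn ℝ s f) (hx : x ∈ s)
    (hy : y ∈ s) (hd : HasFDerivAt f f' x) : f x + f' (y - x) ≤ f y := by
  let L : ℝ →ᵃ[ℝ] F := AffineMap.lineMap x y
  have hL0 : L 0 = x := AffineMap.lineMap_apply_zero x y
  have hL1 : L 1 = y := AffineMap.lineMap_apply_one x y
  have hline : ConvexOn ℝ (L ⁻¹' s) (f ∘ L) := hf.comp_affineMap L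
  have hderiv : HasDerivAt (f ∘ L) (f' (y - x)) 0 := by
    rw [← hL0] at hd
    exact hd.comp_hasDerivAt 0 AffineMap.hasDerivAt_lineMap
  have hslope := hline.le_slope_of_hasDerivAt (x := 0) (y := 1)
    (by rw [mem_preimage, hL0]; exact hx) (by rw [mem_preimage, hL1]; exact hy) one_pos hderiv
  rw [slope_def_field, Function.comp_apply, Function.comp_apply, hL0, hL1, sub_zero,
    div_one] at hslope
  linarith

variable [CompleteSpace E]

theorem ConvexOn.hasSubgradientAt_of_hasGradientAt {f : E → ℝ} {g x : E}
    (hf : ConvexOn ℝ univ f) (hg : HasGradientAt f g x) : HasSubgradientAt f g x := fun y => by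
  simpa using hf.add_fderiv_sub_le (mem_univ x) (mem_univ y) hg.hasFDerivAt

theorem hasGradientAt_half_mul_norm_sq (lam : ℝ) (x : E) :
    HasGradientAt (fun x : E => lam / 2 * ‖x‖ ^ 2) (lam • x) x := by
  rw [hasGradientAt_iff_hasFDerivAt]
  refine ((hasStrictFDerivAt_norm_sq x).hasFDerivAt.const_mul (lam / 2)).congr_fderiv ?_
  ext v
  simp
  ring

end Subgradient

section PointyPotential

variable {d : ℕ} {W : Euc d → ℝ} {lam : ℝ}

theorem hasSubgradientAt_hatGrad_sub_smul (hsymm : ∀ x : Euc d, W (-x) = W x)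
    (hconv : ConvexOn ℝ univ (fun x : Euc d => W x - lam / 2 * ‖x‖ ^ 2))
    (hC1 : ContDiffOn ℝ 1 W {(0 : Euc d)}ᶜ) (u : Euc d) :
    HasSubgradientAt (fun x : Euc d => W x - lam / 2 * ‖x‖ ^ 2) (hatGrad W u - lam • u) u := by
  rcases eq_or_ne u 0 with rfl | hu
  · simpa [hatGrad] using hconv.hasSubgradientAt_zero_of_even (fun x => by simp [hsymm])
  · have hW : HasGradientAt W (hatGrad W u) u := by
      rw [hatGrad, if_neg hu]
      exact ((hC1.contDiffAt (isOpen_compl_singleton.mem_nhds hu)).differentiableAt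
        one_ne_zero).hasGradientAt
    refine hconv.hasSubgradientAt_of_hasGradientAt ?_
    rw [hasGradientAt_iff_hasFDerivAt, map_sub]
    exact hW.hasFDerivAt.sub (hasGradientAt_half_mul_norm_sq lam u).hasFDerivAt

theorem mul_norm_sub_sq_le_inner_hatGrad_sub (hsymm : ∀ x : Euc d, W (-x) = W x)
    (hconv : ConvexOn ℝ univ (fun x : Euc d => W x - lam / 2 * ‖x‖ ^ 2))
    (hC1 : ContDiffOn ℝ 1 W {(0 : Euc d)}ᶜ) (u v : Euc d) :
    lam * ‖u - v‖ ^ 2 ≤ ⟪hatGrad W u - hatGrad W v, u - v⟫ := by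
  have hmono := (hasSubgradientAt_hatGrad_sub_smul hsymm hconv hC1 u).inner_sub_nonneg
    (hasSubgradientAt_hatGrad_sub_smul hsymm hconv hC1 v)
  have e : hatGrad W u - lam • u - (hatGrad W v - lam • v)
      = (hatGrad W u - hatGrad W v) - lam • (u - v) := by
    rw [smul_sub]; abel
  rw [e, inner_sub_left, real_inner_smul_left, real_inner_self_eq_norm_sq] at hmono
  linarith

theorem norm_hatGrad_le {winf : ℝ} (hwinf : 0 ≤ winf)
    (hbound : ∀ x : Euc d, x ≠ 0 → ‖gradient W x‖ ≤ winf) (x : Euc d) :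
    ‖hatGrad W x‖ ≤ winf := by
  rw [hatGrad]
  split_ifs with hx
  · simpa using hwinf
  · exact hbound x hx

variable (W) in
theorem measurable_hatGrad : Measurable (hatGrad W) :=
  Measurable.ite measurableSet_eq measurable_const
    ((LinearIsometryEquiv.continuous _).measurable.comp (measurable_fderiv ℝ W))

end PointyPotential

theorem mul_norm_sub_sq_le_inner_integral_sub {E : Type*} [NormedAddCommGroup E]
    [InnerProductSpace ℝ E] [CompleteSpace E] [MeasurableSpace E] {ρ : Measure E}
    [IsProbabilityMeasure ρ] {G : E → E} {lam : ℝ}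
    (hG : ∀ x, Integrable (fun z => G (x - z)) ρ)
    (hmono : ∀ u v, lam * ‖u - v‖ ^ 2 ≤ ⟪G u - G v, u - v⟫) (x y : E) :
    lam * ‖x - y‖ ^ 2 ≤ ⟪∫ z, G (x - z) ∂ρ - ∫ z, G (y - z) ∂ρ, x - y⟫ := by
  rw [← integral_sub (hG x) (hG y), real_inner_comm,
    ← integral_inner (f := fun z => G (x - z) - G (y - z)) ((hG x).sub (hG y))]
  calc lam * ‖x - y‖ ^ 2 = ∫ _, lam * ‖x - y‖ ^ 2 ∂ρ := by simp
    _ ≤ ∫ z, ⟪x - y, G (x - z) - G (y - z)⟫ ∂ρ := by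
      refine integral_mono (integrable_const _) (((hG x).sub (hG y)).const_inner _) fun z => ?_
      simpa [real_inner_comm] using hmono (x - z) (y - z)

theorem stmt1_general {d : ℕ} (W : Euc d → ℝ) (lam winf : ℝ) (hwinf : 0 ≤ winf)
    (hsymm : ∀ x : Euc d, W (-x) = W x)
    (hconv : ConvexOn ℝ Set.univ (fun x : Euc d => W x - lam / 2 * ‖x‖ ^ 2))
    (hC1 : ContDiffOn ℝ 1 W {(0 : Euc d)}ᶜ)
    (hbound : ∀ x : Euc d, x ≠ 0 → ‖gradient W x‖ ≤ winf)
    (ρ : Measure (Euc d)) [IsProbabilityMeasure ρ]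
    (a : Euc d → Euc d) (ha : ∀ x, a x = -∫ y, hatGrad W (x - y) ∂ρ) :
    (∀ x, ‖a x‖ ≤ winf) ∧
    (∀ x y : Euc d, ⟪a x - a y, x - y⟫ ≤ -lam * ‖x - y‖ ^ 2) := by
  have hbnd := norm_hatGrad_le hwinf hbound
  have hint : ∀ x, Integrable (fun z => hatGrad W (x - z)) ρ := fun x =>
    .of_bound ((measurable_hatGrad W).comp (measurable_const.sub measurable_id)).aestronglyMeasurable
      winf (ae_of_all _ fun z => hbnd _)
  refine ⟨fun x => ?_, fun x y => ?_⟩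
  · rw [ha, norm_neg]
    simpa using norm_integral_le_of_norm_le_const (μ := ρ) (ae_of_all _ fun z => hbnd (x - z))
  · have hmono := mul_norm_sub_sq_le_inner_integral_sub hint
      (mul_norm_sub_sq_le_inner_hatGrad_sub hsymm hconv hC1) x y
    rw [ha, ha, neg_sub_neg, ← neg_sub, inner_neg_left]
    linarith

/-- For a pointy potential `W` and a probability measure `ρ`, the velocity field
`â_ρ(x) = -∫ ∇̂W(x-y) ρ(dy)` is bounded by `w∞` and one-sided Lipschitz with constant `-λ`. -/
theorem stmt1 {d : ℕ} (hd : 1 ≤ d) (W : Euc d → ℝ) (lam winf : ℝ) (hwinf : 0 ≤ winf)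
    (hsymm : ∀ x : Euc d, W (-x) = W x) (hW0 : W 0 = 0)
    (hconv : ConvexOn ℝ Set.univ (fun x : Euc d => W x - lam / 2 * ‖x‖ ^ 2))
    (hC1 : ContDiffOn ℝ 1 W {(0 : Euc d)}ᶜ)
    (hbound : ∀ x : Euc d, x ≠ 0 → ‖gradient W x‖ ≤ winf)
    (ρ : Measure (Euc d)) [IsProbabilityMeasure ρ]
    (a : Euc d → Euc d) (ha : ∀ x, a x = -∫ y, hatGrad W (x - y) ∂ρ) :
    (∀ x, ‖a x‖ ≤ winf) ∧
    (∀ x y : Euc d, ⟪a x - a y, x - y⟫ ≤ -lam * ‖x - y‖ ^ 2) :=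
  stmt1_general W lam winf hwinf hsymm hconv hC1 hbound ρ a ha
end
end

section
/- Let W be a pointy potential on ℝ^d with constants λ ∈ ℝ and w_∞ ≥ 0, let ρ^{ini} be a probability measure on ℝ^d, and assume the strict 1/2-CFL condition w_∞ Σ_{i=1}^d Δt/Δx_i < 1/2. Let ρ_J^0 := ρ^{ini}(C_J) and let (ρ_J^n)_{J∈ℤ^d, n∈ℕ} and ((a_i)_J^n) be produced by the upwind scheme. Then for all n ∈ ℕ and J ∈ ℤ^d: ρ_J^n ≥ 0; |(a_i)_J^n| ≤ w_∞ for every i = 1,…,d; and Σ_{J∈ℤ^d} ρ_J^n = 1. -/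
open MeasureTheory Real Set
open scoped RealInnerProductSpace ENNReal

noncomputable section

/-- Positive part `r⁺ = max(r,0)`. -/
def pos (r : ℝ) : ℝ := max r 0

/-- Negative part `r⁻ = max(-r,0)`. -/
def neg (r : ℝ) : ℝ := max (-r) 0

/-- The node `x_J = (J_1 Δx_1, …, J_d Δx_d)`. -/
def node {d : ℕ} (Δx : Fin d → ℝ) (J : Fin d → ℤ) : Euc d :=
  (EuclideanSpace.equiv (Fin d) ℝ).symm (fun i => (J i : ℝ) * Δx i)

/-- The cell `C_J = Π_i [(J_i - 1/2)Δx_i, (J_i + 1/2)Δx_i)`. -/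
def cell {d : ℕ} (Δx : Fin d → ℝ) (J : Fin d → ℤ) : Set (Euc d) :=
  {y | ∀ i, ((J i : ℝ) - 1/2) * Δx i ≤ y i ∧ y i < ((J i : ℝ) + 1/2) * Δx i}

/-- The discrete velocities `(a_i)_J = -Σ_K ρ_K (∇̂W)_i (x_J - x_K)`. -/
def discVel {d : ℕ} (W : Euc d → ℝ) (Δx : Fin d → ℝ) (ρ : (Fin d → ℤ) → ℝ)
    (J : Fin d → ℤ) (i : Fin d) : ℝ :=
  -∑' K : Fin d → ℤ, ρ K * hatGrad W (node Δx J - node Δx K) i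

/-- One step of the upwind scheme. -/
def upwindStep {d : ℕ} (Δx : Fin d → ℝ) (Δt : ℝ) (a : (Fin d → ℤ) → Fin d → ℝ)
    (ρ : (Fin d → ℤ) → ℝ) (J : Fin d → ℤ) : ℝ :=
  ρ J - ∑ i : Fin d, (Δt / Δx i) *
    (pos (a J i) * ρ J - neg (a (J + Pi.single i 1) i) * ρ (J + Pi.single i 1)
      - pos (a (J - Pi.single i 1) i) * ρ (J - Pi.single i 1) + neg (a J i) * ρ J)


/-! By induction on `n`, the invariant is `ρⁿ ≥ 0` with `∑ ρⁿ = 1`. It holds at `n = 0` because the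
cells partition `ℝ^d`. Given it, each velocity is an average of values of `∇̂W`, hence bounded by
`w∞`. The scheme writes `ρⁿ⁺¹_J` as `(1 - ∑ᵢ (Δt/Δxᵢ)|(aᵢ)_J|) ρ_J` plus nonnegative upwind
contributions of the neighbours, and the CFL condition makes the first coefficient nonnegative.
The scheme is in conservation form, so the fluxes telescope and the mass is conserved. -/

lemma pos_eq_posPart (r : ℝ) : pos r = r⁺ := rfl

lemma neg_eq_negPart (r : ℝ) : neg r = r⁻ := rfl

lemma posPart_le_abs (r : ℝ) : r⁺ ≤ |r| := by
  linarith [posPart_add_negPart r, negPart_nonneg r]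

lemma negPart_le_abs (r : ℝ) : r⁻ ≤ |r| := by
  linarith [posPart_add_negPart r, posPart_nonneg r]

lemma summable_mul_of_abs_le {ι : Type*} {b ρ : ι → ℝ} {M : ℝ} (hb : ∀ i, |b i| ≤ M)
    (hρ : Summable ρ) : Summable fun i => b i * ρ i :=
  (hρ.abs.mul_left M).of_norm_bounded fun i => by
    rw [Real.norm_eq_abs, abs_mul]
    exact mul_le_mul_of_nonneg_right (hb i) (abs_nonneg _)

lemma abs_tsum_mul_le_of_hasSum_one {ι : Type*} {p f : ι → ℝ} {M : ℝ} (hp : ∀ i, 0 ≤ p i)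
    (hsum : HasSum p 1) (hf : ∀ i, |f i| ≤ M) : |∑' i, p i * f i| ≤ M := by
  have hpf : HasSum (fun i => p i * f i) (∑' i, p i * f i) := by
    simpa only [mul_comm] using (summable_mul_of_abs_le hf hsum.summable).hasSum
  have hupper : HasSum (fun i => p i * M) M := by simpa using hsum.mul_right M
  have hlower : HasSum (fun i => p i * -M) (-M) := by simpa using hsum.mul_right (-M)
  rw [abs_le]
  constructor
  · exact hasSum_le (fun i => mul_le_mul_of_nonneg_left (neg_le_of_abs_le (hf i)) (hp i))
      hlower hpf
  · exact hasSum_le (fun i => mul_le_mul_of_nonneg_left (le_of_abs_le (hf i)) (hp i))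
      hpf hupper

lemma hasSum_sub_comp_sub_zero {G α : Type*} [AddCommGroup G] [AddCommGroup α]
    [TopologicalSpace α] [IsTopologicalAddGroup α] {f : G → α} (hf : Summable f) (c : G) :
    HasSum (fun J => f J - f (J - c)) 0 := by
  have hshift : HasSum (fun J => f (J - c)) (∑' J, f J) :=
    (Equiv.subRight c).hasSum_iff.mpr hf.hasSum
  simpa using hf.hasSum.sub hshift

section Velocity

variable {d : ℕ} {W : Euc d → ℝ} {winf : ℝ}

lemma abs_hatGrad_apply_le (hwinf : 0 ≤ winf)
    (hbound : ∀ x : Euc d, x ≠ 0 → ‖gradient W x‖ ≤ winf) (x : Euc d) (i : Fin d) :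
    |hatGrad W x i| ≤ winf := by
  rw [← Real.norm_eq_abs]
  refine (PiLp.norm_apply_le _ i).trans ?_
  by_cases hx : x = 0
  · simpa [hatGrad, hx] using hwinf
  · simpa [hatGrad, hx] using hbound x hx

lemma abs_discVel_le (hwinf : 0 ≤ winf)
    (hbound : ∀ x : Euc d, x ≠ 0 → ‖gradient W x‖ ≤ winf) (Δx : Fin d → ℝ)
    {ρ : (Fin d → ℤ) → ℝ} (hρ : ∀ K, 0 ≤ ρ K) (hsum : HasSum ρ 1) (J : Fin d → ℤ) (i : Fin d) :
    |discVel W Δx ρ J i| ≤ winf := by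
  rw [discVel, abs_neg]
  exact abs_tsum_mul_le_of_hasSum_one hρ hsum fun K => abs_hatGrad_apply_le hwinf hbound _ i

end Velocity

section Upwind

variable {d : ℕ} (Δx : Fin d → ℝ) (Δt : ℝ) (a : (Fin d → ℤ) → Fin d → ℝ)
  (ρ : (Fin d → ℤ) → ℝ)

/-- The numerical flux through the face between `J` and `J + eᵢ`. -/
def upwindFlux (i : Fin d) (J : Fin d → ℤ) : ℝ :=
  (a J i)⁺ * ρ J - (a (J + Pi.single i 1) i)⁻ * ρ (J + Pi.single i 1)

lemma upwindStep_eq_sub_sum_flux (J : Fin d → ℤ) :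
    upwindStep Δx Δt a ρ J = ρ J - ∑ i, Δt / Δx i *
      (upwindFlux a ρ i J - upwindFlux a ρ i (J - Pi.single i 1)) := by
  simp only [upwindStep, upwindFlux, pos_eq_posPart, neg_eq_negPart, sub_add_cancel]
  congr 1
  exact Finset.sum_congr rfl fun i _ => by ring

/-- All coefficients are nonnegative as soon as `∑ i, Δt / Δx i * |a J i| ≤ 1`. -/
lemma upwindStep_eq_nonneg_combination (J : Fin d → ℤ) :
    upwindStep Δx Δt a ρ J = (1 - ∑ i, Δt / Δx i * |a J i|) * ρ J + ∑ i, Δt / Δx i *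
      ((a (J + Pi.single i 1) i)⁻ * ρ (J + Pi.single i 1)
        + (a (J - Pi.single i 1) i)⁺ * ρ (J - Pi.single i 1)) := by
  have hterm : ∀ i, Δt / Δx i * (pos (a J i) * ρ J
      - neg (a (J + Pi.single i 1) i) * ρ (J + Pi.single i 1)
      - pos (a (J - Pi.single i 1) i) * ρ (J - Pi.single i 1) + neg (a J i) * ρ J)
      = Δt / Δx i * |a J i| * ρ J - Δt / Δx i *
        ((a (J + Pi.single i 1) i)⁻ * ρ (J + Pi.single i 1)
          + (a (J - Pi.single i 1) i)⁺ * ρ (J - Pi.single i 1)) := fun i => by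
    rw [← posPart_add_negPart, pos_eq_posPart, pos_eq_posPart, neg_eq_negPart, neg_eq_negPart]
    ring
  rw [upwindStep, Finset.sum_congr rfl fun i _ => hterm i, Finset.sum_sub_distrib, ← Finset.sum_mul]
  ring

variable {Δx Δt a ρ}

lemma upwindStep_nonneg (hΔx : ∀ i, 0 < Δx i) (hΔt : 0 ≤ Δt) {M : ℝ}
    (ha : ∀ J i, |a J i| ≤ M) (hCFL : M * ∑ i, Δt / Δx i ≤ 1) (hρ : ∀ J, 0 ≤ ρ J)
    (J : Fin d → ℤ) : 0 ≤ upwindStep Δx Δt a ρ J := by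
  have hc : ∀ i, 0 ≤ Δt / Δx i := fun i => div_nonneg hΔt (hΔx i).le
  have hlocal : ∑ i, Δt / Δx i * |a J i| ≤ 1 :=
    calc ∑ i, Δt / Δx i * |a J i| ≤ ∑ i, Δt / Δx i * M :=
          Finset.sum_le_sum fun i _ => mul_le_mul_of_nonneg_left (ha J i) (hc i)
      _ = M * ∑ i, Δt / Δx i := by rw [← Finset.sum_mul, mul_comm]
      _ ≤ 1 := hCFL
  rw [upwindStep_eq_nonneg_combination]
  refine add_nonneg (mul_nonneg (sub_nonneg.mpr hlocal) (hρ J)) (Finset.sum_nonneg fun i _ => ?_)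
  exact mul_nonneg (hc i) (add_nonneg (mul_nonneg (negPart_nonneg _) (hρ _))
    (mul_nonneg (posPart_nonneg _) (hρ _)))

lemma summable_upwindFlux {M : ℝ} (ha : ∀ J i, |a J i| ≤ M) (hρ : Summable ρ) (i : Fin d) :
    Summable (upwindFlux a ρ i) := by
  have hshift : Summable fun J => ρ (J + Pi.single i 1) :=
    ((Equiv.addRight (Pi.single i 1)).summable_iff (f := ρ)).mpr hρ
  refine (summable_mul_of_abs_le (M := M) (fun J => ?_) hρ).sub
    (summable_mul_of_abs_le (M := M) (fun J => ?_) hshift)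
  · rw [abs_of_nonneg (posPart_nonneg _)]
    exact (posPart_le_abs _).trans (ha J i)
  · rw [abs_of_nonneg (negPart_nonneg _)]
    exact (negPart_le_abs _).trans (ha _ i)

lemma HasSum.upwindStep {M : ℝ} (ha : ∀ J i, |a J i| ≤ M) {m : ℝ} (hρ : HasSum ρ m) :
    HasSum (upwindStep Δx Δt a ρ) m := by
  have hflux : HasSum (fun J => ∑ i, Δt / Δx i *
      (upwindFlux a ρ i J - upwindFlux a ρ i (J - Pi.single i 1))) 0 := by
    simpa only [mul_zero, Finset.sum_const_zero] using hasSum_sum fun i _ =>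
      (hasSum_sub_comp_sub_zero (summable_upwindFlux ha hρ.summable i) _).mul_left (Δt / Δx i)
  rw [funext (upwindStep_eq_sub_sum_flux Δx Δt a ρ), ← sub_zero m]
  exact hρ.sub hflux

end Upwind

section Cells

variable {d : ℕ} (Δx : Fin d → ℝ)

def cellIndex (y : Euc d) : Fin d → ℤ := fun i => ⌊y i / Δx i + 1 / 2⌋

lemma cell_eq_preimage_cellIndex (hΔx : ∀ i, 0 < Δx i) (J : Fin d → ℤ) :
    cell Δx J = cellIndex Δx ⁻¹' {J} := by
  ext y
  simp only [cell, cellIndex, mem_ofPred_eq, mem_preimage, mem_singleton_iff, funext_iff,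
    Int.floor_eq_iff]
  refine forall_congr' fun i => ?_
  rw [← sub_le_iff_le_add, ← lt_sub_iff_add_lt, le_div_iff₀ (hΔx i), div_lt_iff₀ (hΔx i)]
  constructor <;> rintro ⟨h₁, h₂⟩ <;> constructor <;> linarith

lemma measurable_cellIndex : Measurable (cellIndex Δx) :=
  measurable_pi_lambda _ fun i =>
    (((measurable_pi_apply i).comp (PiLp.continuous_ofLp 2 _).measurable).div_const _
      |>.add_const _).floor

lemma hasSum_measure_cell (hΔx : ∀ i, 0 < Δx i) (μ : Measure (Euc d)) [IsFiniteMeasure μ] :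
    HasSum (fun J => (μ (cell Δx J)).toReal) (μ univ).toReal := by
  have hunion : ∑' J, μ (cell Δx J) = μ univ := by
    simp only [cell_eq_preimage_cellIndex Δx hΔx]
    rw [← measure_iUnion (pairwise_disjoint_fiber _)
      fun J => measurable_cellIndex Δx (measurableSet_singleton J)]
    congr
    exact iUnion_eq_univ_iff.mpr fun y => ⟨_, rfl⟩
  have h := ENNReal.hasSum_toReal (hunion ▸ measure_ne_top μ univ)
  rwa [← ENNReal.tsum_toReal_eq fun J => measure_ne_top μ _, hunion] at h

end Cells

theorem stmt5_general {d : ℕ} (W : Euc d → ℝ) (winf : ℝ) (hwinf : 0 ≤ winf)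
    (hbound : ∀ x : Euc d, x ≠ 0 → ‖gradient W x‖ ≤ winf)
    (Δx : Fin d → ℝ) (hΔx : ∀ i, 0 < Δx i) (Δt : ℝ) (hΔt : 0 < Δt)
    (hCFL : winf * ∑ i, Δt / Δx i < 1 / 2)
    (ρini : Measure (Euc d)) [IsProbabilityMeasure ρini]
    (ρ : ℕ → (Fin d → ℤ) → ℝ)
    (h0 : ∀ J, ρ 0 J = (ρini (cell Δx J)).toReal)
    (hrec : ∀ n, ρ (n + 1) = upwindStep Δx Δt (discVel W Δx (ρ n)) (ρ n)) :
    ∀ n : ℕ, (∀ J, 0 ≤ ρ n J) ∧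
      (∀ J i, |discVel W Δx (ρ n) J i| ≤ winf) ∧
      HasSum (ρ n) 1 := by
  have hinv : ∀ n, (∀ J, 0 ≤ ρ n J) ∧ HasSum (ρ n) 1 := by
    intro n
    induction n with
    | zero =>
      refine ⟨fun J => h0 J ▸ ENNReal.toReal_nonneg, ?_⟩
      simpa [funext h0] using hasSum_measure_cell Δx hΔx ρini
    | succ n ih =>
      have hvel := abs_discVel_le hwinf hbound Δx ih.1 ih.2
      rw [hrec n]
      exact ⟨upwindStep_nonneg hΔx hΔt.le hvel (by linarith) ih.1, ih.2.upwindStep hvel⟩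
  exact fun n => ⟨(hinv n).1, abs_discVel_le hwinf hbound Δx (hinv n).1 (hinv n).2, (hinv n).2⟩

/-- Under the strict 1/2-CFL condition, the upwind scheme preserves nonnegativity
and total mass, and the discrete velocities are bounded by `w∞`. -/
theorem stmt5 {d : ℕ} (hd : 1 ≤ d) (W : Euc d → ℝ) (lam winf : ℝ) (hwinf : 0 ≤ winf)
    (hsymm : ∀ x : Euc d, W (-x) = W x) (hW0 : W 0 = 0)
    (hconv : ConvexOn ℝ Set.univ (fun x : Euc d => W x - lam / 2 * ‖x‖ ^ 2))
    (hC1 : ContDiffOn ℝ 1 W {(0 : Euc d)}ᶜ)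
    (hbound : ∀ x : Euc d, x ≠ 0 → ‖gradient W x‖ ≤ winf)
    (Δx : Fin d → ℝ) (hΔx : ∀ i, 0 < Δx i) (Δt : ℝ) (hΔt : 0 < Δt)
    (hCFL : winf * ∑ i, Δt / Δx i < 1 / 2)
    (ρini : Measure (Euc d)) [IsProbabilityMeasure ρini]
    (ρ : ℕ → (Fin d → ℤ) → ℝ)
    (h0 : ∀ J, ρ 0 J = (ρini (cell Δx J)).toReal)
    (hrec : ∀ n, ρ (n + 1) = upwindStep Δx Δt (discVel W Δx (ρ n)) (ρ n)) :
    ∀ n : ℕ, (∀ J, 0 ≤ ρ n J) ∧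
      (∀ J i, |discVel W Δx (ρ n) J i| ≤ winf) ∧
      HasSum (ρ n) 1 :=
  stmt5_general W winf hwinf hbound Δx hΔx Δt hΔt hCFL ρini ρ h0 hrec
end
end

section
/- Let W : ℝ^d → ℝ be radial (W(x) = 𝒲(|x|) for some function 𝒲) and satisfy: W(−x) = W(x), W(0) = 0, W is C¹ on ℝ^d \ {0}, and x ↦ W(x) − (λ/2)|x|² is convex for some λ > 0. Let ρ^{ini} be a probability measure supported in the closed ℓ^∞ ball B_∞(M_1, R), where M_1 := ∫_{ℝ^d} x ρ^{ini}(dx) is its center of mass. Set w_∞ := sup{|∇W(x)| : x ∈ B_∞(0, 2R + 2Δx), x ≠ 0} and assume the strict 1/2-CFL condition w_∞ Σ_{i=1}^d Δt/Δx_i < 1/2. Let ρ_J^0 := ρ^{ini}(C_J), let (ρ_J^n) be produced by the upwind scheme, and let M_{1,Δx} := Σ_J x_J ρ_J^0. Then for every n ∈ ℕ and every J ∈ ℤ^d with x_J ∉ B_∞(M_{1,Δx}, R + Δx), one has ρ_J^n = 0. -/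
open MeasureTheory Real Set
open scoped RealInnerProductSpace ENNReal

noncomputable section

/-- The closed ball of center `c` and radius `r` for the `ℓ^∞` norm on `ℝ^d`. -/
def ballInf {d : ℕ} (c : Euc d) (r : ℝ) : Set (Euc d) := {x | ∀ i, |x i - c i| ≤ r}


lemma node_apply {d : ℕ} (Δx : Fin d → ℝ) (J : Fin d → ℤ) (i : Fin d) :
    node Δx J i = (J i : ℝ) * Δx i := rfl

lemma abs_coord_le_norm {d : ℕ} (z : Euc d) (i : Fin d) : |z i| ≤ ‖z‖ := by
  have h := EuclideanSpace.norm_eq z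
  have h1 : |z i| = Real.sqrt (‖z i‖ ^ 2) := by
    rw [Real.sqrt_sq_eq_abs]; simp
  rw [h, h1]
  apply Real.sqrt_le_sqrt
  exact Finset.single_le_sum (f := fun j => ‖z j‖ ^ 2) (fun j _ => by positivity) (Finset.mem_univ i)

lemma pos_add_neg (r : ℝ) : pos r + neg r = |r| := by
  rcases le_total r 0 with h | h
  · rw [pos, neg, max_eq_right h, max_eq_left (by linarith), abs_of_nonpos h]; ring
  · rw [pos, neg, max_eq_left h, max_eq_right (by linarith), abs_of_nonneg h]; ring

lemma pos_nonneg (r : ℝ) : 0 ≤ pos r := le_max_right _ _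
lemma neg_nonneg' (r : ℝ) : 0 ≤ neg r := le_max_right _ _
lemma pos_eq_zero {r : ℝ} (h : r ≤ 0) : pos r = 0 := max_eq_right h
lemma neg_eq_zero' {r : ℝ} (h : 0 ≤ r) : neg r = 0 := max_eq_right (by linarith)

lemma node_shift_same {d : ℕ} (Δx : Fin d → ℝ) (J : Fin d → ℤ) (i : Fin d) (m : ℤ) :
    node Δx (J + Pi.single i m) i = node Δx J i + (m : ℝ) * Δx i := by
  rw [node_apply, node_apply, Pi.add_apply, Pi.single_eq_same]
  push_cast; ring

lemma node_shift_ne {d : ℕ} (Δx : Fin d → ℝ) (J : Fin d → ℤ) {i i' : Fin d} (h : i' ≠ i) (m : ℤ) :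
    node Δx (J + Pi.single i m) i' = node Δx J i' := by
  rw [node_apply, node_apply, Pi.add_apply, Pi.single_eq_of_ne h]
  push_cast; ring

lemma sub_single_eq_add {d : ℕ} (J : Fin d → ℤ) (i : Fin d) :
    J - Pi.single i 1 = J + Pi.single i (-1) := by
  funext i'
  rcases eq_or_ne i' i with rfl | h
  · simp; ring
  · simp [Pi.single_eq_of_ne h]

lemma node_sub_apply {d : ℕ} (Δx : Fin d → ℝ) (J K : Fin d → ℤ) (i : Fin d) :
    (node Δx J - node Δx K) i = ((J i : ℝ) - K i) * Δx i := by
  have : (node Δx J - node Δx K) i = node Δx J i - node Δx K i := rfl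
  rw [this, node_apply, node_apply]; ring




lemma cell_measurable {d : ℕ} (Δx : Fin d → ℝ) (J : Fin d → ℤ) :
    MeasurableSet (cell Δx J) := by
  have : cell Δx J = ⋂ i, (fun y : Euc d => y i) ⁻¹'
      (Set.Ico (((J i : ℝ) - 1/2) * Δx i) (((J i : ℝ) + 1/2) * Δx i)) := by
    ext y; simp [cell, Set.mem_iInter, Set.mem_Ico]
  rw [this]
  exact MeasurableSet.iInter fun i => (by fun_prop : Measurable (fun y : Euc d => y i)) measurableSet_Ico

lemma cell_disjoint {d : ℕ} {Δx : Fin d → ℝ} (hΔx : ∀ i, 0 < Δx i) {J K : Fin d → ℤ}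
    (hJK : J ≠ K) : Disjoint (cell Δx J) (cell Δx K) := by
  rw [Set.disjoint_left]
  intro y hyJ hyK
  obtain ⟨i, hi⟩ := Function.ne_iff.mp hJK
  rcases lt_or_gt_of_ne hi with h | h
  · have h1 := (hyJ i).2
    have h2 := (hyK i).1
    have : (J i : ℝ) + 1/2 ≤ (K i : ℝ) - 1/2 := by
      have : (J i : ℝ) + 1 ≤ K i := by exact_mod_cast Int.add_one_le_iff.mpr h
      linarith
    have := mul_le_mul_of_nonneg_right this (hΔx i).le
    linarith
  · have h1 := (hyK i).2
    have h2 := (hyJ i).1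
    have : (K i : ℝ) + 1/2 ≤ (J i : ℝ) - 1/2 := by
      have : (K i : ℝ) + 1 ≤ J i := by exact_mod_cast Int.add_one_le_iff.mpr h
      linarith
    have := mul_le_mul_of_nonneg_right this (hΔx i).le
    linarith

lemma exists_cell {d : ℕ} {Δx : Fin d → ℝ} (hΔx : ∀ i, 0 < Δx i) (y : Euc d) :
    ∃ J : Fin d → ℤ, y ∈ cell Δx J := by
  refine ⟨fun i => ⌊y i / Δx i + 1/2⌋, fun i => ?_⟩
  have h1 := Int.floor_le (y i / Δx i + 1/2)
  have h2 := Int.lt_floor_add_one (y i / Δx i + 1/2)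
  have hpos := hΔx i
  constructor
  · rw [← le_div_iff₀ hpos]
    push_cast
    linarith
  · rw [← div_lt_iff₀ hpos]
    push_cast
    linarith

lemma dist_cell_node {d : ℕ} {Δx : Fin d → ℝ} (hΔx : ∀ i, 0 < Δx i) {J : Fin d → ℤ}
    {y : Euc d} (hy : y ∈ cell Δx J) (i : Fin d) : |y i - node Δx J i| ≤ Δx i / 2 := by
  have h1 := (hy i).1
  have h2 := (hy i).2
  rw [node_apply, abs_le]
  constructor <;> nlinarith

lemma lattice_finite {d : ℕ} {Δx : Fin d → ℝ} (hΔx : ∀ i, 0 < Δx i) (c : Euc d) (r : ℝ) :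
    {J : Fin d → ℤ | ∀ i, |node Δx J i - c i| ≤ r}.Finite := by
  apply Set.Finite.subset (Set.Finite.pi (fun i =>
    Set.finite_Icc (⌈(c i - r) / Δx i⌉) (⌊(c i + r) / Δx i⌋)))
  intro J hJ
  simp only [Set.mem_pi, Set.mem_univ, forall_true_left, Set.mem_Icc]
  intro i
  have h := abs_le.mp (hJ i)
  rw [node_apply] at h
  have hpos := hΔx i
  constructor
  · apply Int.ceil_le.mpr
    rw [div_le_iff₀ hpos]
    push_cast
    linarith [h.1]
  · apply Int.le_floor.mpr
    rw [le_div_iff₀ hpos]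
    push_cast
    linarith [h.2]


lemma fderiv_eq_inner_gradient {d : ℕ} (W : Euc d → ℝ) (x v : Euc d) :
    fderiv ℝ W x v = ⟪gradient W x, v⟫ := by
  rw [gradient]; simp

section grads
variable {d : ℕ} {W : Euc d → ℝ} (hC1 : ContDiffOn ℝ 1 W {(0 : Euc d)}ᶜ)

include hC1 in
lemma Wdiff {z : Euc d} (hz : z ≠ 0) : DifferentiableAt ℝ W z := by
  have hopen : IsOpen ({(0 : Euc d)}ᶜ) := isOpen_compl_singleton
  exact (hC1.contDiffAt (hopen.mem_nhds (by simpa using hz))).differentiableAt one_ne_zero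

include hC1 in
lemma grad_antisym (hsymm : ∀ x : Euc d, W (-x) = W x) {z : Euc d} (hz : z ≠ 0) :
    gradient W (-z) = -gradient W z := by
  have hdz : DifferentiableAt ℝ W z := Wdiff hC1 hz
  have hdnz : DifferentiableAt ℝ W (-z) := Wdiff hC1 (by simpa using hz)
  -- W ∘ (Neg.neg) = W
  have hcomp : HasFDerivAt (fun x : Euc d => W (-x))
      ((fderiv ℝ W (-z)).comp (-(ContinuousLinearMap.id ℝ (Euc d)))) z := by
    have h1 : HasFDerivAt (fun x : Euc d => -x) (-(ContinuousLinearMap.id ℝ (Euc d))) z := by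
      exact (hasFDerivAt_id (𝕜 := ℝ) z).neg
    exact (hdnz.hasFDerivAt).comp z h1
  have heq : (fun x : Euc d => W (-x)) = W := funext hsymm
  rw [heq] at hcomp
  have h2 : (fderiv ℝ W (-z)).comp (-(ContinuousLinearMap.id ℝ (Euc d))) = fderiv ℝ W z :=
    hcomp.fderiv.symm
  -- translate to gradient
  apply ext_inner_right ℝ
  intro v
  have h3 : (fderiv ℝ W (-z)) (-v) = fderiv ℝ W z v := by
    have := DFunLike.congr_fun h2 v
    simpa using this
  rw [fderiv_eq_inner_gradient, fderiv_eq_inner_gradient] at h3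
  rw [inner_neg_left, ← h3, ← inner_neg_right]
  simp

end grads

section grads2
variable {d : ℕ} {W : Euc d → ℝ} (hC1 : ContDiffOn ℝ 1 W {(0 : Euc d)}ᶜ)

-- the derivative of t ↦ W (c + t • v) at points where c + t•v ≠ 0
include hC1 in
lemma line_hasDerivAt (c v : Euc d) {t : ℝ} (h : c + t • v ≠ 0) :
    HasDerivAt (fun t : ℝ => W (c + t • v)) ⟪gradient W (c + t • v), v⟫ t := by
  have hd : DifferentiableAt ℝ W (c + t • v) := Wdiff hC1 h
  have hline : HasDerivAt (fun t : ℝ => c + t • v) v t := by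
    simpa using ((hasDerivAt_id t).smul_const v).const_add c
  have := (hd.hasFDerivAt).comp_hasDerivAt t hline
  rwa [fderiv_eq_inner_gradient] at this

include hC1 in
lemma inner_grad_ge (hsymm : ∀ x : Euc d, W (-x) = W x)
    {lam : ℝ}
    (hconv : ConvexOn ℝ Set.univ (fun x : Euc d => W x - lam / 2 * ‖x‖ ^ 2))
    {z : Euc d} (hz : z ≠ 0) : lam * ‖z‖ ^ 2 ≤ ⟪gradient W z, z⟫ := by
  set F : Euc d → ℝ := fun x => W x - lam / 2 * ‖x‖ ^ 2 with hF
  -- g t = F (t • z), convex on ℝ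
  have hA : ConvexOn ℝ Set.univ (fun t : ℝ => F (t • z)) := by
    have := hconv.comp_affineMap (AffineMap.lineMap (0 : Euc d) z)
    have he : (F ∘ (AffineMap.lineMap (0 : Euc d) z)) = fun t : ℝ => F (t • z) := by
      funext t; simp [AffineMap.lineMap_apply]
    rw [he] at this
    simpa using this
  -- derivative of g at t ≠ 0
  have hg : ∀ t : ℝ, t ≠ 0 → HasDerivAt (fun t : ℝ => F (t • z))
      (⟪gradient W (t • z), z⟫ - lam * t * ‖z‖ ^ 2) t := by
    intro t ht
    have hne : (0 : Euc d) + t • z ≠ 0 := by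
      simpa using smul_ne_zero ht hz
    have h1 : HasDerivAt (fun t : ℝ => W (t • z)) ⟪gradient W (t • z), z⟫ t := by
      have := line_hasDerivAt hC1 0 z (t := t) hne
      simpa using this
    have h2 : HasDerivAt (fun t : ℝ => lam / 2 * ‖t • z‖ ^ 2) (lam * t * ‖z‖ ^ 2) t := by
      have he : (fun t : ℝ => lam / 2 * ‖t • z‖ ^ 2) = fun t : ℝ => lam / 2 * ‖z‖ ^ 2 * t ^ 2 := by
        funext s
        rw [norm_smul]
        simp [mul_pow]
        ring
      rw [he]
      have := ((hasDerivAt_pow 2 t).const_mul (lam / 2 * ‖z‖ ^ 2))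
      refine this.congr_deriv ?_
      ring
    exact h1.sub h2
  have hm1 : HasDerivAt (fun t : ℝ => F (t • z))
      (⟪gradient W ((-1 : ℝ) • z), z⟫ - lam * (-1) * ‖z‖ ^ 2) (-1) := hg (-1) (by norm_num)
  have hp1 : HasDerivAt (fun t : ℝ => F (t • z))
      (⟪gradient W ((1 : ℝ) • z), z⟫ - lam * 1 * ‖z‖ ^ 2) 1 := hg 1 (by norm_num)
  have hle1 := hA.le_slope_of_hasDerivAt (Set.mem_univ (-1 : ℝ)) (Set.mem_univ (1 : ℝ))
    (by norm_num) hm1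
  have hle2 := hA.slope_le_of_hasDerivAt (Set.mem_univ (-1 : ℝ)) (Set.mem_univ (1 : ℝ))
    (by norm_num) hp1
  have hle := hle1.trans hle2
  have hanti : gradient W ((-1 : ℝ) • z) = - gradient W z := by
    have := grad_antisym hC1 hsymm hz
    simpa using this
  rw [hanti, one_smul] at hle
  rw [inner_neg_left] at hle
  linarith

include hC1 in
lemma grad_structure {𝒲 : ℝ → ℝ} (hrad : ∀ x : Euc d, W x = 𝒲 ‖x‖)
    (hsymm : ∀ x : Euc d, W (-x) = W x)
    {lam : ℝ} (hlam : 0 ≤ lam)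
    (hconv : ConvexOn ℝ Set.univ (fun x : Euc d => W x - lam / 2 * ‖x‖ ^ 2))
    {z : Euc d} (hz : z ≠ 0) :
    ∃ c : ℝ, 0 ≤ c ∧ gradient W z = c • z := by
  set K : Submodule ℝ (Euc d) := ℝ ∙ z with hK
  set U := K.reflection with hU
  have hWU : ∀ x : Euc d, W (U x) = W x := fun x => by
    rw [hrad, hrad, U.norm_map]
  have hUzz : U z = z := Submodule.reflection_mem_subspace_eq_self (Submodule.mem_span_singleton_self z)
  have hdz : DifferentiableAt ℝ W z := Wdiff hC1 hz
  set g := gradient W z with hg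
  -- chain rule
  have hUlin : HasFDerivAt (fun x : Euc d => U x)
      (U.toContinuousLinearEquiv : Euc d →L[ℝ] Euc d) z :=
    (U.toContinuousLinearEquiv : Euc d →L[ℝ] Euc d).hasFDerivAt
  have hder : HasFDerivAt W (fderiv ℝ W z) (U z) := by rw [hUzz]; exact hdz.hasFDerivAt
  have hcomp : HasFDerivAt (W ∘ ⇑U)
      ((fderiv ℝ W z).comp (U.toContinuousLinearEquiv : Euc d →L[ℝ] Euc d)) z :=
    hder.comp z hUlin
  have heq : W ∘ ⇑U = W := funext hWU
  rw [heq] at hcomp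
  have h2 : (fderiv ℝ W z).comp (U.toContinuousLinearEquiv : Euc d →L[ℝ] Euc d)
      = fderiv ℝ W z := hcomp.fderiv.symm
  have hinner : ∀ v : Euc d, ⟪g, U v⟫ = ⟪g, v⟫ := by
    intro v
    have h3 := DFunLike.congr_fun h2 v
    simp only [ContinuousLinearMap.coe_comp', Function.comp_apply] at h3
    rw [fderiv_eq_inner_gradient, fderiv_eq_inner_gradient] at h3
    have h4 : ((U.toContinuousLinearEquiv : Euc d →L[ℝ] Euc d) v) = U v := rfl
    rw [h4] at h3
    exact h3
  -- U g = g
  have hUg : U g = g := by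
    apply ext_inner_right ℝ
    intro w
    have h5 : ⟪U g, w⟫ = ⟪g, U w⟫ := by
      conv_lhs => rw [show w = U (U.symm w) from (U.apply_symm_apply w).symm]
      rw [U.inner_map_map]
      have h6 : U.symm w = U w := by rw [hU, Submodule.reflection_symm]
      rw [h6]
    rw [h5, hinner w]
  have hmem : g ∈ K := (Submodule.reflection_eq_self_iff g).mp hUg
  obtain ⟨a, ha⟩ := Submodule.mem_span_singleton.mp hmem
  refine ⟨a, ?_, ha.symm⟩
  have hig := inner_grad_ge hC1 hsymm hconv hz
  rw [← hg, ← ha] at hig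
  rw [real_inner_smul_left, real_inner_self_eq_norm_sq] at hig
  have hzn : 0 < ‖z‖ := norm_pos_iff.mpr hz
  have hz2 : 0 < ‖z‖ ^ 2 := by positivity
  nlinarith

end grads2

section grads3
variable {d : ℕ} {W : Euc d → ℝ} (hC1 : ContDiffOn ℝ 1 W {(0 : Euc d)}ᶜ)

include hC1 in
lemma grad_bound {lam : ℝ}
    (hconv : ConvexOn ℝ Set.univ (fun x : Euc d => W x - lam / 2 * ‖x‖ ^ 2)) (r : ℝ) :
    ∃ B : ℝ, ∀ z : Euc d, z ≠ 0 → ‖z‖ ≤ r → ‖gradient W z‖ ≤ B := by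
  set F : Euc d → ℝ := fun x => W x - lam / 2 * ‖x‖ ^ 2 with hF
  have hFc : Continuous F := by
    exact continuousOn_univ.mp (hconv.continuousOn isOpen_univ)
  obtain ⟨C0, hC0⟩ := (isCompact_closedBall (0 : Euc d) (r + 1)).exists_bound_of_continuousOn
    hFc.continuousOn
  refine ⟨2 * C0 + |lam| * r, ?_⟩
  intro z hz hzr
  have hr0 : (0 : ℝ) ≤ r := le_trans (norm_nonneg z) hzr
  have hC0nn : 0 ≤ C0 := le_trans (norm_nonneg _) (hC0 0 (by simp; positivity))
  -- directional estimate
  have hdir : ∀ v : Euc d, ‖v‖ ≤ 1 → ⟪gradient W z, v⟫ ≤ 2 * C0 + |lam| * r := by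
    intro v hv
    have hA : ConvexOn ℝ Set.univ (fun t : ℝ => F (z + t • v)) := by
      have := hconv.comp_affineMap (AffineMap.lineMap (z : Euc d) (z + v))
      have he : (F ∘ (AffineMap.lineMap (z : Euc d) (z + v))) = fun t : ℝ => F (z + t • v) := by
        funext t; simp [AffineMap.lineMap_apply, add_comm]
      rw [he] at this
      simpa using this
    have hd : HasDerivAt (fun t : ℝ => F (z + t • v))
        (⟪gradient W z, v⟫ - lam * ⟪z, v⟫) 0 := by
      have h1 : HasDerivAt (fun t : ℝ => W (z + t • v)) ⟪gradient W z, v⟫ 0 := by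
        have := line_hasDerivAt hC1 z v (t := 0) (by simpa using hz)
        simpa using this
      have h2 : HasDerivAt (fun t : ℝ => lam / 2 * ‖z + t • v‖ ^ 2) (lam * ⟪z, v⟫) 0 := by
        have he : (fun t : ℝ => lam / 2 * ‖z + t • v‖ ^ 2)
            = fun t : ℝ => lam / 2 * ⟪z + t • v, z + t • v⟫ := by
          funext s; rw [real_inner_self_eq_norm_sq]
        rw [he]
        have hline : HasDerivAt (fun t : ℝ => z + t • v) v 0 := by
          simpa using ((hasDerivAt_id (0:ℝ)).smul_const v).const_add z
        have := (hline.inner ℝ hline).const_mul (lam / 2)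
        refine this.congr_deriv ?_
        simp only [zero_smul, add_zero]
        rw [real_inner_comm v z]
        ring
      exact h1.sub h2
    have hslope := hA.le_slope_of_hasDerivAt (Set.mem_univ (0 : ℝ)) (Set.mem_univ (1 : ℝ))
      (by norm_num) hd
    rw [slope_def_field] at hslope
    simp only [zero_smul, add_zero, sub_zero, div_one, one_smul] at hslope
    have hFz1 : F (z + v) ≤ C0 := by
      have := hC0 (z + v) (by
        simp only [Metric.mem_closedBall, dist_zero_right]
        calc ‖z + v‖ ≤ ‖z‖ + ‖v‖ := norm_add_le _ _
        _ ≤ r + 1 := by gcongr)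
      exact le_trans (le_abs_self _) this
    have hFz2 : -C0 ≤ F z := by
      have := hC0 z (by
        simp only [Metric.mem_closedBall, dist_zero_right]
        exact hzr.trans (by linarith))
      exact neg_le_of_abs_le this
    have hiz : lam * ⟪z, v⟫ ≤ |lam| * r := by
      calc lam * ⟪z, v⟫ ≤ |lam * ⟪z, v⟫| := le_abs_self _
      _ = |lam| * |⟪z, v⟫| := abs_mul _ _
      _ ≤ |lam| * r := by
          gcongr
          calc |⟪z, v⟫| ≤ ‖z‖ * ‖v‖ := abs_real_inner_le_norm _ _
          _ ≤ r * 1 := by gcongr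
          _ = r := mul_one r
    linarith
  by_cases hg : gradient W z = 0
  · rw [hg]; simp; positivity
  · have := hdir (‖gradient W z‖⁻¹ • gradient W z) (by
      rw [norm_smul]
      simp [norm_inv]
      rw [inv_mul_cancel₀ (norm_ne_zero_iff.mpr hg)])
    rwa [real_inner_smul_right, real_inner_self_eq_norm_sq, pow_two,
      inv_mul_cancel_left₀ (norm_ne_zero_iff.mpr hg)] at this

end grads3

section invariant
variable {d : ℕ} {W : Euc d → ℝ} {𝒲 : ℝ → ℝ} {lam : ℝ}
  {Δx : Fin d → ℝ} {Δt : ℝ} {R Δ : ℝ} {M : Euc d} {winf : ℝ}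

lemma upwind_invariant
    (hrad : ∀ x : Euc d, W x = 𝒲 ‖x‖) (hsymm : ∀ x : Euc d, W (-x) = W x)
    (hlam : 0 ≤ lam)
    (hC1 : ContDiffOn ℝ 1 W {(0 : Euc d)}ᶜ)
    (hconv : ConvexOn ℝ Set.univ (fun x : Euc d => W x - lam / 2 * ‖x‖ ^ 2))
    (hΔx : ∀ i, 0 < Δx i) (hΔt : 0 < Δt) (hR : 0 ≤ R)
    (hΔle : ∀ i, Δx i ≤ Δ) (hΔpos : 0 < Δ)
    (hwinf0 : 0 ≤ winf)
    (hgradb : ∀ z : Euc d, z ≠ 0 → (∀ i, |z i| ≤ 2 * R + 2 * Δ) → ‖gradient W z‖ ≤ winf)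
    (hCFL : winf * ∑ i, Δt / Δx i < 1 / 2)
    {ρn : (Fin d → ℤ) → ℝ} {Sf : Finset (Fin d → ℤ)}
    (hSf : ∀ J, J ∈ Sf ↔ ∀ i, |node Δx J i - M i| ≤ R + Δ)
    (hsupp : ∀ J, J ∉ Sf → ρn J = 0) (hnn : ∀ J, 0 ≤ ρn J)
    (hmass : ∑ J ∈ Sf, ρn J ≤ 1) :
    (∀ J, J ∉ Sf → upwindStep Δx Δt (discVel W Δx ρn) ρn J = 0) ∧
    (∀ J, 0 ≤ upwindStep Δx Δt (discVel W Δx ρn) ρn J) ∧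
    (∑ J ∈ Sf, upwindStep Δx Δt (discVel W Δx ρn) ρn J ≤ 1) := by
  set a := discVel W Δx ρn with ha
  -- the velocity as finite sum
  have ha_eq : ∀ J i, a J i = -∑ K ∈ Sf, ρn K * hatGrad W (node Δx J - node Δx K) i := by
    intro J i
    rw [ha, discVel]
    congr 1
    apply tsum_eq_sum
    intro K hK
    rw [hsupp K hK, zero_mul]
  -- sign lemmas
  have hsign : ∀ (J : Fin d → ℤ) (i : Fin d) (K : Fin d → ℤ), K ∈ Sf →
      R + Δ - Δx i < node Δx J i - M i →
      0 ≤ ρn K * hatGrad W (node Δx J - node Δx K) i := by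
    intro J i K hK hJi
    set z : Euc d := node Δx J - node Δx K with hz
    by_cases hz0 : z = 0
    · rw [hatGrad, if_pos hz0]
      simp
    · rw [hatGrad, if_neg hz0]
      obtain ⟨c, hc0, hc⟩ := grad_structure hC1 hrad hsymm hlam hconv hz0
      rw [hc]
      have hzi : (0:ℝ) ≤ z i := by
        have hKi := ((hSf K).mp hK i)
        have h1 : node Δx K i - M i ≤ R + Δ := (abs_le.mp hKi).2
        have h2 : -Δx i < z i := by
          have : z i = node Δx J i - node Δx K i := rfl
          rw [this]; linarith
        have h3 : z i = ((J i : ℝ) - K i) * Δx i := node_sub_apply Δx J K i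
        rw [h3] at h2 ⊢
        have h4 : (-1 : ℝ) < (J i : ℝ) - K i := by
          have := (hΔx i)
          nlinarith
        have h5 : (0 : ℝ) ≤ (J i : ℝ) - K i := by
          have : (-1 : ℤ) < J i - K i := by exact_mod_cast (by push_cast; linarith : ((-1:ℤ):ℝ) < ((J i - K i : ℤ) : ℝ))
          have : (0 : ℤ) ≤ J i - K i := by omega
          exact_mod_cast this
        exact mul_nonneg h5 (hΔx i).le
      have : (c • z) i = c * z i := rfl
      rw [this]
      exact mul_nonneg (hnn K) (mul_nonneg hc0 hzi)
  have hsign' : ∀ (J : Fin d → ℤ) (i : Fin d) (K : Fin d → ℤ), K ∈ Sf →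
      node Δx J i - M i < -(R + Δ - Δx i) →
      ρn K * hatGrad W (node Δx J - node Δx K) i ≤ 0 := by
    intro J i K hK hJi
    set z : Euc d := node Δx J - node Δx K with hz
    by_cases hz0 : z = 0
    · rw [hatGrad, if_pos hz0]
      simp
    · rw [hatGrad, if_neg hz0]
      obtain ⟨c, hc0, hc⟩ := grad_structure hC1 hrad hsymm hlam hconv hz0
      rw [hc]
      have hzi : z i ≤ 0 := by
        have hKi := ((hSf K).mp hK i)
        have h1 : -(R + Δ) ≤ node Δx K i - M i := (abs_le.mp hKi).1
        have h2 : z i < Δx i := by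
          have : z i = node Δx J i - node Δx K i := rfl
          rw [this]; linarith
        have h3 : z i = ((J i : ℝ) - K i) * Δx i := node_sub_apply Δx J K i
        rw [h3] at h2 ⊢
        have h4 : (J i : ℝ) - K i < 1 := by
          have := (hΔx i)
          nlinarith
        have h5 : (J i : ℝ) - K i ≤ 0 := by
          have : (J i - K i : ℤ) < 1 := by exact_mod_cast (by push_cast; linarith : ((J i - K i : ℤ) : ℝ) < ((1:ℤ):ℝ))
          have : (J i - K i : ℤ) ≤ 0 := by omega
          exact_mod_cast this
        have := (hΔx i).le
        nlinarith
      have : (c • z) i = c * z i := rfl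
      rw [this]
      have h6 : c * z i ≤ 0 := mul_nonpos_iff.mpr (Or.inl ⟨hc0, hzi⟩)
      exact mul_nonpos_iff.mpr (Or.inl ⟨hnn K, h6⟩)
  have hApos : ∀ (J : Fin d → ℤ) (i : Fin d), R + Δ - Δx i < node Δx J i - M i → a J i ≤ 0 := by
    intro J i h
    rw [ha_eq J i, neg_nonpos]
    exact Finset.sum_nonneg fun K hK => hsign J i K hK h
  have hAneg : ∀ (J : Fin d → ℤ) (i : Fin d), node Δx J i - M i < -(R + Δ - Δx i) → 0 ≤ a J i := by
    intro J i h
    rw [ha_eq J i, neg_nonneg]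
    exact Finset.sum_nonpos fun K hK => hsign' J i K hK h
  -- velocity bound on the support
  have habound : ∀ J ∈ Sf, ∀ i, |a J i| ≤ winf := by
    intro J hJ i
    rw [ha_eq J i, abs_neg]
    calc |∑ K ∈ Sf, ρn K * hatGrad W (node Δx J - node Δx K) i|
        ≤ ∑ K ∈ Sf, |ρn K * hatGrad W (node Δx J - node Δx K) i| := Finset.abs_sum_le_sum_abs _ _
      _ ≤ ∑ K ∈ Sf, ρn K * winf := by
          apply Finset.sum_le_sum
          intro K hK
          rw [abs_mul, abs_of_nonneg (hnn K)]
          apply mul_le_mul_of_nonneg_left _ (hnn K)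
          set z : Euc d := node Δx J - node Δx K with hz
          by_cases hz0 : z = 0
          · rw [hatGrad, if_pos hz0]
            simpa using hwinf0
          · rw [hatGrad, if_neg hz0]
            refine le_trans (abs_coord_le_norm _ i) (hgradb z hz0 fun i' => ?_)
            have hJc := (hSf J).mp hJ i'
            have hKc := (hSf K).mp hK i'
            have : z i' = (node Δx J i' - M i') - (node Δx K i' - M i') := by
              have : z i' = node Δx J i' - node Δx K i' := rfl
              rw [this]; ring
            rw [this]
            calc |(node Δx J i' - M i') - (node Δx K i' - M i')|
                ≤ |node Δx J i' - M i'| + |node Δx K i' - M i'| := abs_sub _ _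
              _ ≤ (R + Δ) + (R + Δ) := add_le_add hJc hKc
              _ = 2 * R + 2 * Δ := by ring
      _ = (∑ K ∈ Sf, ρn K) * winf := by rw [Finset.sum_mul]
      _ ≤ 1 * winf := mul_le_mul_of_nonneg_right hmass hwinf0
      _ = winf := one_mul winf
  -- support preservation
  have hsuppstep : ∀ J, J ∉ Sf → upwindStep Δx Δt a ρn J = 0 := by
    intro J hJ
    have hρJ : ρn J = 0 := hsupp J hJ
    obtain ⟨i0, hi0⟩ : ∃ i, R + Δ < |node Δx J i - M i| := by
      by_contra h
      push_neg at h
      exact hJ ((hSf J).mpr h)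
    have hz : ∀ i : Fin d, pos (a (J - Pi.single i 1) i) * ρn (J - Pi.single i 1) = 0 ∧
        neg (a (J + Pi.single i 1) i) * ρn (J + Pi.single i 1) = 0 := by
      intro i
      constructor
      · by_cases hmem : (J - Pi.single i 1) ∈ Sf
        · have hm := (hSf _).mp hmem
          have h2 : node Δx (J - Pi.single i 1) i = node Δx J i - Δx i := by
            rw [sub_single_eq_add, node_shift_same]; push_cast; ring
          have hii : i0 = i := by
            by_contra hne
            have h1 : node Δx (J - Pi.single i 1) i0 = node Δx J i0 := by
              rw [sub_single_eq_add, node_shift_ne Δx J hne (-1)]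
            have := hm i0
            rw [h1] at this
            linarith [hi0, this]
          subst hii
          have hmi := hm i0
          rw [h2] at hmi
          have habs := abs_le.mp hmi
          rcases le_or_gt (node Δx J i0 - M i0) 0 with hle | hlt
          · exfalso
            have : R + Δ < -(node Δx J i0 - M i0) := by
              rw [abs_of_nonpos hle] at hi0; exact hi0
            have := habs.1
            linarith [(hΔx i0).le]
          · have hgt : R + Δ < node Δx J i0 - M i0 := by
              rwa [abs_of_pos hlt] at hi0
            have : R + Δ - Δx i0 < node Δx (J - Pi.single i0 1) i0 - M i0 := by
              rw [h2]; linarith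
            rw [pos_eq_zero (hApos _ i0 this), zero_mul]
        · rw [hsupp _ hmem, mul_zero]
      · by_cases hmem : (J + Pi.single i 1) ∈ Sf
        · have hm := (hSf _).mp hmem
          have h2 : node Δx (J + Pi.single i 1) i = node Δx J i + Δx i := by
            rw [node_shift_same]; push_cast; ring
          have hii : i0 = i := by
            by_contra hne
            have h1 : node Δx (J + Pi.single i 1) i0 = node Δx J i0 :=
              node_shift_ne Δx J hne 1
            have := hm i0
            rw [h1] at this
            linarith [hi0, this]
          subst hii
          have hmi := hm i0
          rw [h2] at hmi
          have habs := abs_le.mp hmi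
          rcases le_or_gt (node Δx J i0 - M i0) 0 with hle | hlt
          · have hlt2 : node Δx J i0 - M i0 < -(R + Δ) := by
              rw [abs_of_nonpos hle] at hi0; linarith
            have : node Δx (J + Pi.single i0 1) i0 - M i0 < -(R + Δ - Δx i0) := by
              rw [h2]; linarith
            rw [neg_eq_zero' (hAneg _ i0 this), zero_mul]
          · exfalso
            have : R + Δ < node Δx J i0 - M i0 := by rwa [abs_of_pos hlt] at hi0
            have := habs.2
            linarith [(hΔx i0).le]
        · rw [hsupp _ hmem, mul_zero]
    rw [upwindStep, hρJ]
    rw [Finset.sum_eq_zero, sub_zero]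
    intro i _
    rw [(hz i).1, (hz i).2]
    ring
  -- nonnegativity
  have hsplit : ∀ J, upwindStep Δx Δt a ρn J
      = ρn J * (1 - ∑ i, (Δt / Δx i) * (pos (a J i) + neg (a J i)))
        + ∑ i, (Δt / Δx i) * (neg (a (J + Pi.single i 1) i) * ρn (J + Pi.single i 1)
            + pos (a (J - Pi.single i 1) i) * ρn (J - Pi.single i 1)) := by
    intro J
    rw [upwindStep, mul_sub, mul_one, Finset.mul_sum, sub_add, ← Finset.sum_sub_distrib]
    congr 1
    exact Finset.sum_congr rfl fun i _ => by ring
  have hcfl1 : ∀ J, J ∈ Sf → ∑ i, (Δt / Δx i) * (pos (a J i) + neg (a J i)) ≤ 1 := by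
    intro J hJ
    calc ∑ i, (Δt / Δx i) * (pos (a J i) + neg (a J i))
        = ∑ i, (Δt / Δx i) * |a J i| := by
          exact Finset.sum_congr rfl fun i _ => by rw [pos_add_neg]
      _ ≤ ∑ i, (Δt / Δx i) * winf := by
          apply Finset.sum_le_sum
          intro i _
          exact mul_le_mul_of_nonneg_left (habound J hJ i)
            (div_nonneg hΔt.le (hΔx i).le)
      _ = winf * ∑ i, Δt / Δx i := by rw [← Finset.sum_mul, mul_comm]
      _ ≤ 1 / 2 := hCFL.le
      _ ≤ 1 := by norm_num
  have hnnstep : ∀ J, 0 ≤ upwindStep Δx Δt a ρn J := by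
    intro J
    rw [hsplit J]
    have hterm2 : 0 ≤ ∑ i, (Δt / Δx i) * (neg (a (J + Pi.single i 1) i) * ρn (J + Pi.single i 1)
        + pos (a (J - Pi.single i 1) i) * ρn (J - Pi.single i 1)) := by
      apply Finset.sum_nonneg
      intro i _
      apply mul_nonneg (div_nonneg hΔt.le (hΔx i).le)
      exact add_nonneg (mul_nonneg (neg_nonneg' _) (hnn _)) (mul_nonneg (pos_nonneg _) (hnn _))
    have hterm1 : 0 ≤ ρn J * (1 - ∑ i, (Δt / Δx i) * (pos (a J i) + neg (a J i))) := by
      by_cases hJ : J ∈ Sf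
      · exact mul_nonneg (hnn J) (by linarith [hcfl1 J hJ])
      · rw [hsupp J hJ, zero_mul]
    linarith
  -- mass estimate
  refine ⟨hsuppstep, hnnstep, ?_⟩
  classical
  set e : Fin d → (Fin d → ℤ) := fun i => Pi.single i 1 with he
  set Tf : Finset (Fin d → ℤ) := Sf ∪ Finset.univ.biUnion
      (fun i => Sf.image (· + e i) ∪ Sf.image (· - e i)) with hTf
  have hST : Sf ⊆ Tf := Finset.subset_union_left
  set F : Fin d → (Fin d → ℤ) → ℝ := fun i J =>
    pos (a J i) * ρn J - neg (a (J + e i) i) * ρn (J + e i) with hF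
  have hkey : ∀ i J, F i J ≠ 0 → J ∈ Tf ∧ J ∈ Tf.image (· - e i) := by
    intro i J hFJ
    have hJS : J ∈ Sf ∨ J + e i ∈ Sf := by
      by_contra h
      push_neg at h
      apply hFJ
      rw [hF]
      simp only
      rw [hsupp J h.1, hsupp _ h.2, mul_zero, mul_zero, sub_zero]
    rcases hJS with h | h
    · constructor
      · exact hST h
      · apply Finset.mem_image.mpr
        refine ⟨J + e i, ?_, by simp⟩
        apply Finset.mem_union_right
        apply Finset.mem_biUnion.mpr
        exact ⟨i, Finset.mem_univ i, Finset.mem_union_left _ (Finset.mem_image_of_mem _ h)⟩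
    · constructor
      · apply Finset.mem_union_right
        apply Finset.mem_biUnion.mpr
        refine ⟨i, Finset.mem_univ i, Finset.mem_union_right _ ?_⟩
        apply Finset.mem_image.mpr
        exact ⟨J + e i, h, by simp⟩
      · exact Finset.mem_image.mpr ⟨J + e i, hST h, by simp⟩
  have htel : ∀ i, ∑ J ∈ Tf, F i (J - e i) = ∑ J ∈ Tf, F i J := by
    intro i
    have hinj : ∀ x ∈ Tf, ∀ y ∈ Tf, x - e i = y - e i → x = y := by
      intro x _ y _ h
      have := congrArg (· + e i) h
      simpa using this
    rw [← Finset.sum_image hinj]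
    have h1 : ∑ J ∈ Tf.image (· - e i), F i J = ∑ J ∈ Tf ∪ Tf.image (· - e i), F i J := by
      apply Finset.sum_subset Finset.subset_union_right
      intro J _ hJ
      by_contra h
      exact hJ (hkey i J h).2
    have h2 : ∑ J ∈ Tf, F i J = ∑ J ∈ Tf ∪ Tf.image (· - e i), F i J := by
      apply Finset.sum_subset Finset.subset_union_left
      intro J _ hJ
      by_contra h
      exact hJ (hkey i J h).1
    rw [h1, h2]
  have hstepF : ∀ J, upwindStep Δx Δt a ρn J
      = ρn J - ∑ i, (Δt / Δx i) * (F i J - F i (J - e i)) := by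
    intro J
    rw [upwindStep]
    congr 1
    apply Finset.sum_congr rfl
    intro i _
    rw [hF]
    simp only
    rw [sub_add_cancel]
    ring
  have hTmass : ∑ J ∈ Tf, upwindStep Δx Δt a ρn J = ∑ J ∈ Tf, ρn J := by
    calc ∑ J ∈ Tf, upwindStep Δx Δt a ρn J
        = ∑ J ∈ Tf, (ρn J - ∑ i, (Δt / Δx i) * (F i J - F i (J - e i))) :=
          Finset.sum_congr rfl fun J _ => hstepF J
      _ = ∑ J ∈ Tf, ρn J - ∑ J ∈ Tf, ∑ i, (Δt / Δx i) * (F i J - F i (J - e i)) :=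
          Finset.sum_sub_distrib _ _
      _ = ∑ J ∈ Tf, ρn J := by
          rw [Finset.sum_comm]
          have : ∀ i ∈ Finset.univ, ∑ J ∈ Tf, (Δt / Δx i) * (F i J - F i (J - e i)) = 0 := by
            intro i _
            rw [← Finset.mul_sum, Finset.sum_sub_distrib, htel i, sub_self, mul_zero]
          rw [Finset.sum_congr rfl this, Finset.sum_const, smul_zero, sub_zero]
  calc ∑ J ∈ Sf, upwindStep Δx Δt a ρn J = ∑ J ∈ Tf, upwindStep Δx Δt a ρn J := by
        apply Finset.sum_subset hST
        intro J _ hJ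
        exact hsuppstep J hJ
    _ = ∑ J ∈ Tf, ρn J := hTmass
    _ = ∑ J ∈ Sf, ρn J := by
        symm
        apply Finset.sum_subset hST
        intro J _ hJ
        exact hsupp J hJ
    _ ≤ 1 := hmass

end invariant


lemma norm_le_of_coords {d : ℕ} {z : Euc d} {r : ℝ} (hr : 0 ≤ r) (h : ∀ i, |z i| ≤ r) :
    ‖z‖ ≤ Real.sqrt d * r := by
  rw [EuclideanSpace.norm_eq]
  have h1 : ∑ i, ‖z i‖ ^ 2 ≤ ∑ _i : Fin d, r ^ 2 := by
    apply Finset.sum_le_sum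
    intro i _
    rw [Real.norm_eq_abs]
    have := h i
    nlinarith [abs_nonneg (z i)]
  calc Real.sqrt (∑ i, ‖z i‖ ^ 2) ≤ Real.sqrt ((d : ℝ) * r ^ 2) := by
        apply Real.sqrt_le_sqrt
        simpa [Finset.sum_const, Finset.card_univ] using h1
    _ = Real.sqrt d * r := by
        rw [Real.sqrt_mul (by positivity), Real.sqrt_sq hr]

lemma cells_mass_le_one {d : ℕ} {Δx : Fin d → ℝ} (hΔx : ∀ i, 0 < Δx i)
    (ρini : Measure (Euc d)) [IsProbabilityMeasure ρini] (T : Finset (Fin d → ℤ)) :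
    ∑ J ∈ T, (ρini (cell Δx J)).toReal ≤ 1 := by
  have hsum : ∑ J ∈ T, ρini (cell Δx J) ≤ 1 := by
    rw [← measure_biUnion_finset (fun J _ K _ hne => cell_disjoint hΔx hne)
      (fun J _ => cell_measurable Δx J)]
    exact prob_le_one
  calc ∑ J ∈ T, (ρini (cell Δx J)).toReal
      = (∑ J ∈ T, ρini (cell Δx J)).toReal := by
        rw [ENNReal.toReal_sum]
        intro J _
        exact measure_ne_top _ _
    _ ≤ (1 : ℝ≥0∞).toReal := ENNReal.toReal_mono ENNReal.one_ne_top hsum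
    _ = 1 := ENNReal.toReal_one

lemma center_close {d : ℕ} [Nonempty (Fin d)] {Δx : Fin d → ℝ} (hΔx : ∀ i, 0 < Δx i)
    {Δ : ℝ} (hΔle : ∀ i, Δx i ≤ Δ) {R : ℝ} (hR : 0 ≤ R)
    (ρini : Measure (Euc d)) [IsProbabilityMeasure ρini]
    {M1 : Euc d} (hM1 : M1 = ∫ x, x ∂ρini)
    (hsupp : ρini (ballInf M1 R)ᶜ = 0)
    {ρ0 : (Fin d → ℤ) → ℝ} (h0 : ∀ J, ρ0 J = (ρini (cell Δx J)).toReal)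
    (i : Fin d) :
    |(∑' K, ρ0 K • node Δx K) i - M1 i| ≤ Δ / 2 := by
  have hΔpos : 0 < Δ := lt_of_lt_of_le (hΔx (Classical.arbitrary _)) (hΔle _)
  set S0 : Set (Fin d → ℤ) := {K | ∀ i', |node Δx K i' - M1 i'| ≤ R + Δ / 2} with hS0
  have hS0fin : S0.Finite := lattice_finite hΔx M1 (R + Δ / 2)
  set S0f := hS0fin.toFinset with hS0f
  have hmemS0 : ∀ K, K ∈ S0f ↔ ∀ i', |node Δx K i' - M1 i'| ≤ R + Δ / 2 := fun K =>
    hS0fin.mem_toFinset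
  -- cells outside S0 are in the complement of the ball
  have hcellout : ∀ K, K ∉ S0f → cell Δx K ⊆ (ballInf M1 R)ᶜ := by
    intro K hK y hy hyB
    apply hK
    rw [hmemS0]
    intro i'
    have d1 := dist_cell_node hΔx hy i'
    have d2 : |y i' - M1 i'| ≤ R := hyB i'
    calc |node Δx K i' - M1 i'| ≤ |node Δx K i' - y i'| + |y i' - M1 i'| := abs_sub_le _ _ _
      _ ≤ Δx i' / 2 + R := by
          rw [abs_sub_comm]
          exact add_le_add d1 d2
      _ ≤ R + Δ / 2 := by linarith [hΔle i']
  have hρ0out : ∀ K, K ∉ S0f → ρ0 K = 0 := by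
    intro K hK
    rw [h0, measure_mono_null (hcellout K hK) hsupp, ENNReal.toReal_zero]
  -- the tsum is a finite sum
  have htsum : (∑' K, ρ0 K • node Δx K) = ∑ K ∈ S0f, ρ0 K • node Δx K := by
    apply tsum_eq_sum
    intro K hK
    rw [hρ0out K hK, zero_smul]
  have hcoord : (∑' K, ρ0 K • node Δx K) i = ∑ K ∈ S0f, ρ0 K * node Δx K i := by
    rw [htsum]
    have h := map_sum (EuclideanSpace.proj (𝕜 := ℝ) i) (fun K => ρ0 K • node Δx K) S0f
    simp only [PiLp.proj_apply, _root_.map_smul, smul_eq_mul] at h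
    exact h
  -- integrability
  have hb : ∀ᵐ y ∂ρini, y ∈ ballInf M1 R := by
    rw [ae_iff]
    exact hsupp
  have hbound : ∀ y : Euc d, y ∈ ballInf M1 R → ‖y‖ ≤ Real.sqrt d * R + ‖M1‖ := by
    intro y hy
    calc ‖y‖ = ‖(y - M1) + M1‖ := by rw [sub_add_cancel]
      _ ≤ ‖y - M1‖ + ‖M1‖ := norm_add_le _ _
      _ ≤ Real.sqrt d * R + ‖M1‖ := by
          have : ‖y - M1‖ ≤ Real.sqrt d * R := norm_le_of_coords hR fun i' => hy i'
          linarith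
  have hInt : Integrable (fun y : Euc d => y) ρini := by
    apply Integrable.mono' (integrable_const (Real.sqrt d * R + ‖M1‖)) aestronglyMeasurable_id
    filter_upwards [hb] with y hy
    exact hbound y hy
  have hIntf : Integrable (fun y : Euc d => y i) ρini := by
    have := (EuclideanSpace.proj (𝕜 := ℝ) i).integrable_comp hInt
    simpa using this
  have hM1i : M1 i = ∫ y, y i ∂ρini := by
    have := (EuclideanSpace.proj (𝕜 := ℝ) i).integral_comp_comm hInt
    rw [hM1]
    simpa using this.symm
  -- split the integral over the cells
  set U : Set (Euc d) := ⋃ K ∈ S0f, cell Δx K with hU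
  have hUm : MeasurableSet U := Finset.measurableSet_biUnion _ fun K _ => cell_measurable Δx K
  have hUc : ρini Uᶜ = 0 := by
    apply measure_mono_null _ hsupp
    intro y hy hyB
    apply hy
    obtain ⟨K, hK⟩ := exists_cell hΔx y
    have hKS : K ∈ S0f := by
      rw [hmemS0]
      intro i'
      have d1 := dist_cell_node hΔx hK i'
      calc |node Δx K i' - M1 i'| ≤ |node Δx K i' - y i'| + |y i' - M1 i'| := abs_sub_le _ _ _
        _ ≤ Δx i' / 2 + R := by rw [abs_sub_comm]; exact add_le_add d1 (hyB i')
        _ ≤ R + Δ / 2 := by linarith [hΔle i']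
    exact Set.mem_biUnion hKS hK
  have hsplit : ∫ y, y i ∂ρini = ∑ K ∈ S0f, ∫ y in cell Δx K, y i ∂ρini := by
    rw [← integral_biUnion_finset S0f (fun K _ => cell_measurable Δx K)
      (fun J _ K _ hne => cell_disjoint hΔx hne) (fun K _ => hIntf.integrableOn)]
    rw [← integral_add_compl hUm hIntf]
    have : ∫ y in Uᶜ, y i ∂ρini = 0 := by
      rw [Measure.restrict_eq_zero.mpr hUc]
      exact integral_zero_measure _
    rw [this, add_zero]
  -- rewrite the node sum as cell integrals
  have hnode : ∀ K, ρ0 K * node Δx K i = ∫ _y in cell Δx K, node Δx K i ∂ρini := by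
    intro K
    rw [setIntegral_const, h0, smul_eq_mul, measureReal_def]
  have hdiff : (∑' K, ρ0 K • node Δx K) i - M1 i
      = ∑ K ∈ S0f, ∫ y in cell Δx K, (node Δx K i - y i) ∂ρini := by
    rw [hcoord, hM1i, hsplit, ← Finset.sum_sub_distrib]
    apply Finset.sum_congr rfl
    intro K _
    rw [hnode K, ← integral_sub (integrableOn_const (C := node Δx K i) (measure_ne_top _ _))
      hIntf.integrableOn]
  rw [hdiff]
  calc |∑ K ∈ S0f, ∫ y in cell Δx K, (node Δx K i - y i) ∂ρini|
      ≤ ∑ K ∈ S0f, |∫ y in cell Δx K, (node Δx K i - y i) ∂ρini| :=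
        Finset.abs_sum_le_sum_abs _ _
    _ ≤ ∑ K ∈ S0f, (Δ / 2) * (ρini (cell Δx K)).toReal := by
        apply Finset.sum_le_sum
        intro K _
        have hb1 : |∫ y in cell Δx K, (node Δx K i - y i) ∂ρini|
            ≤ (Δx i / 2) * (ρini (cell Δx K)).toReal := by
          have h := norm_setIntegral_le_of_norm_le_const (μ := ρini) (s := cell Δx K)
            (f := fun y => node Δx K i - y i) (C := Δx i / 2) (measure_lt_top _ _)
            ?_
          · rw [Real.norm_eq_abs] at h
            exact h
          · intro y hy
            rw [Real.norm_eq_abs, abs_sub_comm]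
            exact dist_cell_node hΔx hy i
        refine le_trans hb1 ?_
        apply mul_le_mul_of_nonneg_right _ ENNReal.toReal_nonneg
        linarith [hΔle i]
    _ = (Δ / 2) * ∑ K ∈ S0f, (ρini (cell Δx K)).toReal := by rw [Finset.mul_sum]
    _ ≤ (Δ / 2) * 1 := by
        apply mul_le_mul_of_nonneg_left (cells_mass_le_one hΔx ρini S0f) (by linarith)
    _ = Δ / 2 := mul_one _

/-- For a radial, strictly λ-convex potential and a compactly supported initial datum,
the support of the numerical solution stays in the ball `B_∞(M_{1,Δx}, R + Δx)`. -/
theorem stmt8 {d : ℕ} (hd : 1 ≤ d) (W : Euc d → ℝ)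
    (𝒲 : ℝ → ℝ) (hrad : ∀ x : Euc d, W x = 𝒲 ‖x‖)
    (lam : ℝ) (hlam : 0 < lam)
    (hsymm : ∀ x : Euc d, W (-x) = W x) (hW0 : W 0 = 0)
    (hC1 : ContDiffOn ℝ 1 W {(0 : Euc d)}ᶜ)
    (hconv : ConvexOn ℝ Set.univ (fun x : Euc d => W x - lam / 2 * ‖x‖ ^ 2))
    (Δx : Fin d → ℝ) (hΔx : ∀ i, 0 < Δx i) (Δt : ℝ) (hΔt : 0 < Δt)
    (R : ℝ) (hR : 0 ≤ R)
    (ρini : Measure (Euc d)) [IsProbabilityMeasure ρini]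
    (hsupp : ρini (ballInf (∫ x, x ∂ρini) R)ᶜ = 0)
    (winf : ℝ)
    (hwinf : winf = sSup ((fun x : Euc d => ‖gradient W x‖) ''
      (ballInf (0 : Euc d) (2 * R + 2 * ⨆ i, Δx i) \ {0})))
    (hCFL : winf * ∑ i, Δt / Δx i < 1 / 2)
    (ρ : ℕ → (Fin d → ℤ) → ℝ)
    (h0 : ∀ J, ρ 0 J = (ρini (cell Δx J)).toReal)
    (hrec : ∀ n, ρ (n + 1) = upwindStep Δx Δt (discVel W Δx (ρ n)) (ρ n)) :
    ∀ n : ℕ, ∀ J : Fin d → ℤ,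
      node Δx J ∉ ballInf (∑' K : Fin d → ℤ, ρ 0 K • node Δx K) (R + ⨆ i, Δx i) →
      ρ n J = 0 := by
  haveI : Nonempty (Fin d) := ⟨⟨0, hd⟩⟩
  set Δ : ℝ := ⨆ i, Δx i with hΔdef
  have hΔle : ∀ i, Δx i ≤ Δ := fun i => le_ciSup (Set.finite_range Δx).bddAbove i
  have hΔpos : 0 < Δ := lt_of_lt_of_le (hΔx (Classical.arbitrary _)) (hΔle _)
  set M1 : Euc d := ∫ x, x ∂ρini with hM1def
  set M : Euc d := ∑' K : Fin d → ℤ, ρ 0 K • node Δx K with hMdef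
  -- facts about winf
  have hr2 : (0 : ℝ) < 2 * R + 2 * Δ := by linarith
  have hbdd : ∀ t ∈ ((fun x : Euc d => ‖gradient W x‖) ''
      (ballInf (0 : Euc d) (2 * R + 2 * Δ) \ {0})), t ≤
        Classical.choose (grad_bound hC1 hconv (Real.sqrt d * (2 * R + 2 * Δ))) := by
    rintro t ⟨z, ⟨hz1, hz2⟩, rfl⟩
    have hz0 : z ≠ 0 := by simpa using hz2
    apply Classical.choose_spec (grad_bound hC1 hconv (Real.sqrt d * (2 * R + 2 * Δ))) z hz0
    apply norm_le_of_coords hr2.le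
    intro i
    have := hz1 i
    simpa using this
  have hBddAbove : BddAbove ((fun x : Euc d => ‖gradient W x‖) ''
      (ballInf (0 : Euc d) (2 * R + 2 * Δ) \ {0})) := ⟨_, hbdd⟩
  have hgradb : ∀ z : Euc d, z ≠ 0 → (∀ i, |z i| ≤ 2 * R + 2 * Δ) → ‖gradient W z‖ ≤ winf := by
    intro z hz hcoords
    rw [hwinf]
    apply le_csSup hBddAbove
    exact ⟨z, ⟨fun i => by simpa using hcoords i, by simpa using hz⟩, rfl⟩
  have hwinf0 : 0 ≤ winf := by
    set z0 : Euc d := EuclideanSpace.single (Classical.arbitrary _) (2 * R + 2 * Δ) with hz0def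
    have hz0ne : z0 ≠ 0 := by
      intro h
      have : z0 (Classical.arbitrary _) = 0 := by rw [h]; rfl
      rw [hz0def, EuclideanSpace.single_apply, if_pos rfl] at this
      linarith
    have : ‖gradient W z0‖ ≤ winf := by
      apply hgradb z0 hz0ne
      intro i
      rw [hz0def, EuclideanSpace.single_apply]
      by_cases h : i = Classical.arbitrary (Fin d)
      · rw [if_pos h, abs_of_pos hr2]
      · rw [if_neg h]
        simp
        linarith
    exact le_trans (norm_nonneg _) this
  -- the support lattice set
  have hSfin : {J : Fin d → ℤ | ∀ i, |node Δx J i - M i| ≤ R + Δ}.Finite :=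
    lattice_finite hΔx M (R + Δ)
  set Sf : Finset (Fin d → ℤ) := hSfin.toFinset with hSfdef
  have hSf : ∀ J, J ∈ Sf ↔ ∀ i, |node Δx J i - M i| ≤ R + Δ := fun J => hSfin.mem_toFinset
  -- the distance between the two centers of mass
  have hMM1 : ∀ i, |M i - M1 i| ≤ Δ / 2 := fun i =>
    center_close hΔx hΔle hR ρini hM1def hsupp h0 i
  -- base case
  have hsupp0 : ∀ J, J ∉ Sf → ρ 0 J = 0 := by
    intro J hJ
    rw [h0]
    have hsub : cell Δx J ⊆ (ballInf M1 R)ᶜ := by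
      intro y hy hyB
      apply hJ
      rw [hSf]
      intro i
      have d1 := dist_cell_node hΔx hy i
      have d2 : |y i - M1 i| ≤ R := hyB i
      have d3 := hMM1 i
      calc |node Δx J i - M i| ≤ |node Δx J i - y i| + |y i - M i| := abs_sub_le _ _ _
        _ ≤ |node Δx J i - y i| + (|y i - M1 i| + |M1 i - M i|) := by
            linarith [abs_sub_le (y i) (M1 i) (M i)]
        _ ≤ Δx i / 2 + (R + Δ / 2) := by
            rw [abs_sub_comm (node Δx J i) (y i), abs_sub_comm (M1 i) (M i)]
            exact add_le_add d1 (add_le_add d2 d3)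
        _ ≤ R + Δ := by linarith [hΔle i]
    rw [measure_mono_null hsub hsupp, ENNReal.toReal_zero]
  have hmass0 : ∑ J ∈ Sf, ρ 0 J ≤ 1 := by
    calc ∑ J ∈ Sf, ρ 0 J = ∑ J ∈ Sf, (ρini (cell Δx J)).toReal :=
          Finset.sum_congr rfl fun J _ => h0 J
      _ ≤ 1 := cells_mass_le_one hΔx ρini Sf
  -- main induction
  have key : ∀ n, (∀ J, J ∉ Sf → ρ n J = 0) ∧ (∀ J, 0 ≤ ρ n J) ∧ (∑ J ∈ Sf, ρ n J ≤ 1) := by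
    intro n
    induction n with
    | zero => exact ⟨hsupp0, fun J => by rw [h0]; exact ENNReal.toReal_nonneg, hmass0⟩
    | succ n ih =>
      obtain ⟨h1, h2, h3⟩ := ih
      have := upwind_invariant hrad hsymm hlam.le hC1 hconv hΔx hΔt hR hΔle hΔpos hwinf0
        hgradb hCFL hSf h1 h2 h3
      rw [hrec n]
      exact this
  intro n J hJ
  apply (key n).1
  rw [hSf]
  exact fun h => hJ h
end
end
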